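/- Let X be a random n×m matrix with entries in [0,1] whose rows are independent. Then for every η > 0, E[min_{t∈[m]} Σ_{i=1}^n X_i^t] ≥ e^{-η} · min_{t∈[m]} E[Σ_{i=1}^n X_i^t] − 2·ln(m)/η. -/

import Mathlib

open MeasureTheory ProbabilityTheory Real

/-! Write `S_t = ∑ i, X_i^t` and `Y = min_t S_t`. For `x ∈ [0, 1]`, convexity gives
`exp (-η x) ≤ 1 - (1 - e^{-η}) x ≤ exp (-(1 - e^{-η}) x)`, so by independence of the rows
`E exp (-η S_t) ≤ exp (-(1 - e^{-η}) E S_t)`. Jensen and `exp (-η Y) ≤ ∑_t exp (-η S_t)` then give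
`exp (-η E Y) ≤ m · exp (-(1 - e^{-η}) min_t E S_t)`; take logarithms and use
`1 - e^{-η} ≥ η e^{-η}`. -/

lemma Real.exp_mul_le_one_add_mul {x : ℝ} (hx : x ∈ Set.Icc (0 : ℝ) 1) (s : ℝ) :
    exp (s * x) ≤ 1 + (exp s - 1) * x := by
  have h := convexOn_exp.2 (Set.mem_univ 0) (Set.mem_univ s) (sub_nonneg.2 hx.2) hx.1
    (sub_add_cancel 1 x)
  simp only [smul_eq_mul, mul_zero, zero_add, exp_zero, mul_one, mul_comm x s] at h
  linarith

lemma Real.mul_exp_neg_le_one_sub_exp_neg (η : ℝ) : η * exp (-η) ≤ 1 - exp (-η) := by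
  have h := mul_le_mul_of_nonneg_right (add_one_le_exp η) (exp_pos (-η)).le
  rw [← exp_add, add_neg_cancel, exp_zero] at h
  linarith

lemma Real.exp_mul_iInf_le_sum {ι : Type*} [Fintype ι] [Nonempty ι] (a : ι → ℝ) (s : ℝ) :
    exp (s * ⨅ i, a i) ≤ ∑ i, exp (s * a i) := by
  obtain ⟨i, hi⟩ := exists_eq_ciInf_of_finite (f := a)
  rw [← hi]
  exact Finset.single_le_sum (fun j _ => (exp_pos (s * a j)).le) (Finset.mem_univ i)

namespace ProbabilityTheory

variable {Ω : Type*} {mΩ : MeasurableSpace Ω} {μ : Measure Ω}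

lemma integrable_exp_mul_of_nonpos_of_nonneg [IsFiniteMeasure μ] {X : Ω → ℝ}
    (hX : AEMeasurable X μ) (hX0 : ∀ᵐ ω ∂μ, 0 ≤ X ω) {s : ℝ} (hs : s ≤ 0) :
    Integrable (fun ω => exp (s * X ω)) μ := by
  refine .of_mem_Icc 0 1 (measurable_exp.comp_aemeasurable (hX.const_mul s)) ?_
  filter_upwards [hX0] with ω hω
  exact ⟨(exp_pos _).le, exp_le_one_iff.2 (mul_nonpos_of_nonpos_of_nonneg hs hω)⟩

lemma mgf_iInf_le_sum [IsFiniteMeasure μ] {ι : Type*} [Fintype ι] [Nonempty ι]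
    {S : ι → Ω → ℝ} (hS : ∀ i, AEMeasurable (S i) μ) (hS0 : ∀ i, ∀ᵐ ω ∂μ, 0 ≤ S i ω)
    {s : ℝ} (hs : s ≤ 0) :
    mgf (fun ω => ⨅ i, S i ω) μ s ≤ ∑ i, mgf (S i) μ s := by
  have hint : ∀ i, Integrable (fun ω => exp (s * S i ω)) μ := fun i =>
    integrable_exp_mul_of_nonpos_of_nonneg (hS i) (hS0 i) hs
  have hinf0 : ∀ᵐ ω ∂μ, 0 ≤ ⨅ i, S i ω := by
    filter_upwards [ae_all_iff.2 hS0] with ω hω using le_ciInf hω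
  simp only [mgf]
  rw [← integral_finsetSum _ fun i _ => hint i]
  exact integral_mono (integrable_exp_mul_of_nonpos_of_nonneg (.iInf hS) hinf0 hs)
    (integrable_finsetSum _ fun i _ => hint i) fun ω => exp_mul_iInf_le_sum _ s

variable [IsProbabilityMeasure μ]

lemma exp_mul_integral_le_mgf {X : Ω → ℝ} (hX : Integrable X μ)
    {s : ℝ} (hexp : Integrable (fun ω => exp (s * X ω)) μ) :
    exp (s * ∫ ω, X ω ∂μ) ≤ mgf X μ s := by
  have h := convexOn_exp.map_integral_le continuousOn_exp isClosed_univ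
    (.of_forall fun _ => Set.mem_univ _) (hX.const_mul s) hexp
  rwa [integral_const_mul] at h

lemma mgf_le_exp_of_mem_Icc {X : Ω → ℝ} (hX : AEMeasurable X μ)
    (hX01 : ∀ᵐ ω ∂μ, X ω ∈ Set.Icc (0 : ℝ) 1) (s : ℝ) :
    mgf X μ s ≤ exp ((exp s - 1) * ∫ ω, X ω ∂μ) := by
  have hXint : Integrable X μ := .of_mem_Icc 0 1 hX hX01
  calc mgf X μ s ≤ ∫ ω, (1 + (exp s - 1) * X ω) ∂μ := by
        refine integral_mono_ae (integrable_exp_mul_of_mem_Icc hX hX01)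
          ((integrable_const 1).add (hXint.const_mul _)) ?_
        filter_upwards [hX01] with ω hω using exp_mul_le_one_add_mul hω s
    _ = (exp s - 1) * (∫ ω, X ω ∂μ) + 1 := by
        rw [integral_add (integrable_const 1) (hXint.const_mul _), integral_const_mul]
        simp [add_comm]
    _ ≤ exp ((exp s - 1) * ∫ ω, X ω ∂μ) := add_one_le_exp _

lemma iIndepFun.mgf_sum_le_exp {ι : Type*} {X : ι → Ω → ℝ} (hindep : iIndepFun X μ)
    (hX : ∀ i, AEMeasurable (X i) μ) (hX01 : ∀ i, ∀ᵐ ω ∂μ, X i ω ∈ Set.Icc (0 : ℝ) 1)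
    (I : Finset ι) (s : ℝ) :
    mgf (fun ω => ∑ i ∈ I, X i ω) μ s ≤ exp ((exp s - 1) * ∫ ω, ∑ i ∈ I, X i ω ∂μ) := by
  have hXint : ∀ i ∈ I, Integrable (X i) μ := fun i _ =>
    .of_mem_Icc 0 1 (hX i) (hX01 i)
  simp_rw [← Finset.sum_apply, hindep.mgf_sum₀ hX, Finset.sum_apply,
    integral_finsetSum I hXint, Finset.mul_sum, exp_sum]
  exact Finset.prod_le_prod (fun _ _ => mgf_nonneg)
    fun i _ => mgf_le_exp_of_mem_Icc (hX i) (hX01 i) s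

lemma mul_iInf_integral_sub_log_card_le {ι : Type*} [Fintype ι] [Nonempty ι] {S : ι → Ω → ℝ}
    (hS : ∀ i, Integrable (S i) μ) (hS0 : ∀ i, ∀ᵐ ω ∂μ, 0 ≤ S i ω) {η a : ℝ} (hη : 0 ≤ η)
    (ha : 0 ≤ a) (hmgf : ∀ i, mgf (S i) μ (-η) ≤ exp (-a * ∫ ω, S i ω ∂μ)) :
    a * (⨅ i, ∫ ω, S i ω ∂μ) - log (Fintype.card ι) ≤ η * ∫ ω, ⨅ i, S i ω ∂μ := by
  obtain ⟨i₀⟩ := ‹Nonempty ι›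
  have hSm : ∀ i, AEMeasurable (S i) μ := fun i => (hS i).aemeasurable
  have hinf0 : ∀ᵐ ω ∂μ, 0 ≤ ⨅ i, S i ω := by
    filter_upwards [ae_all_iff.2 hS0] with ω hω using le_ciInf hω
  have hinf : Integrable (fun ω => ⨅ i, S i ω) μ := by
    refine (hS i₀).mono' (AEMeasurable.iInf hSm).aestronglyMeasurable ?_
    filter_upwards [hinf0] with ω hω
    rw [norm_of_nonneg hω]
    exact ciInf_le (Finite.bddBelow_range _) i₀
  have hbound : exp (-η * ∫ ω, ⨅ i, S i ω ∂μ) ≤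
      Fintype.card ι * exp (-a * ⨅ i, ∫ ω, S i ω ∂μ) :=
    calc exp (-η * ∫ ω, ⨅ i, S i ω ∂μ)
        ≤ mgf (fun ω => ⨅ i, S i ω) μ (-η) := exp_mul_integral_le_mgf hinf
          (integrable_exp_mul_of_nonpos_of_nonneg hinf.aemeasurable hinf0 (neg_nonpos.2 hη))
      _ ≤ ∑ i, mgf (S i) μ (-η) := mgf_iInf_le_sum hSm hS0 (neg_nonpos.2 hη)
      _ ≤ ∑ _i : ι, exp (-a * ⨅ i, ∫ ω, S i ω ∂μ) := Finset.sum_le_sum fun i _ =>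
          (hmgf i).trans <| exp_le_exp.2 <| mul_le_mul_of_nonpos_left
            (ciInf_le (Finite.bddBelow_range _) i) (neg_nonpos.2 ha)
      _ = Fintype.card ι * exp (-a * ⨅ i, ∫ ω, S i ω ∂μ) := by simp
  have hlog := log_le_log (exp_pos _) hbound
  rw [log_exp, log_mul (Nat.cast_ne_zero.2 Fintype.card_ne_zero) (exp_pos _).ne', log_exp] at hlog
  linarith

end ProbabilityTheory

theorem stmt8 {Ω : Type*} [MeasureSpace Ω] [IsProbabilityMeasure (ℙ : Measure Ω)]
    (n m : ℕ) (hm : 0 < m)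
    (X : Fin n → Ω → (Fin m → ℝ)) (hmeas : ∀ i, Measurable (X i))
    (hbdd : ∀ i t ω, X i ω t ∈ Set.Icc (0 : ℝ) 1)
    (hindep : iIndepFun X ℙ)
    (η : ℝ) (hη : 0 < η) :
    (∫ ω, ⨅ t, ∑ i, X i ω t) ≥
      Real.exp (-η) * (⨅ t, ∫ ω, ∑ i, X i ω t) - 2 * Real.log m / η := by
  have : Nonempty (Fin m) := ⟨⟨0, hm⟩⟩
  have hX : ∀ i t, AEMeasurable (fun ω => X i ω t) ℙ := fun i t => (hmeas i).eval.aemeasurable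
  have hcol : ∀ t, iIndepFun (fun i ω => X i ω t) ℙ := fun t =>
    hindep.comp (fun _ v => v t) fun _ => measurable_pi_apply t
  have hmgf : ∀ t, mgf (fun ω => ∑ i, X i ω t) ℙ (-η) ≤
      exp (-(1 - exp (-η)) * ∫ ω, ∑ i, X i ω t) := fun t => by
    simpa only [neg_sub] using
      (hcol t).mgf_sum_le_exp (hX · t) (fun i => .of_forall (hbdd i t)) Finset.univ (-η)
  have hsoft := mul_iInf_integral_sub_log_card_le
    (fun t => integrable_finsetSum _ fun i _ => .of_mem_Icc 0 1 (hX i t)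
      (.of_forall (hbdd i t)))
    (fun t => .of_forall fun ω => Finset.sum_nonneg fun i _ => (hbdd i t ω).1)
    hη.le (sub_nonneg.2 (exp_le_one_iff.2 (neg_nonpos.2 hη.le))) hmgf
  have hμ0 : 0 ≤ ⨅ t, ∫ ω, ∑ i, X i ω t :=
    le_ciInf fun t => integral_nonneg fun ω => Finset.sum_nonneg fun i _ => (hbdd i t ω).1
  have hlog : 0 ≤ log m := log_nonneg (by exact_mod_cast hm)
  have hexp := mul_le_mul_of_nonneg_right (mul_exp_neg_le_one_sub_exp_neg η) hμ0
  rw [Fintype.card_fin] at hsoft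
  rw [ge_iff_le, ← mul_le_mul_iff_of_pos_left hη, mul_sub, mul_div_cancel₀ _ hη.ne']
  linarith
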